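/- Let B ∈ ℤ^{d×n} have columns b₁,…,bₙ, and let A ∈ ℤ^{(d+1)×(n+1)} be its homogenization, the matrix whose columns are a₀ = (1,0,…,0) and a_j = (1,b_j) for 1 ≤ j ≤ n. If the semigroup ℕA ⊆ ℤ^{d+1} is saturated, then the semigroup ℕB ⊆ ℤ^d is saturated. -/
import Mathlib


/-- The `j`-th column of the integer matrix `M`. -/
def matCol {e k : ℕ} (M : Matrix (Fin e) (Fin k) ℤ) (j : Fin k) : Fin e → ℤ := fun i => M i j

/-- The semigroup `ℕM ⊆ ℤ^e` generated by the columns of `M`. -/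
def semigroupN {e k : ℕ} (M : Matrix (Fin e) (Fin k) ℤ) : Set (Fin e → ℤ) :=
  {v | ∃ c : Fin k → ℕ, v = ∑ j, c j • matCol M j}

/-- The cone `ℝ≥0 M ⊆ ℝ^e` spanned by the columns of `M`. -/
def coneR {e k : ℕ} (M : Matrix (Fin e) (Fin k) ℤ) : Set (Fin e → ℝ) :=
  {w | ∃ lam : Fin k → ℝ, (∀ j, 0 ≤ lam j) ∧ w = ∑ j, lam j • (fun i => (M i j : ℝ))}

/-- `ℕM` is saturated: `ℕM = ℤM ∩ ℝ≥0 M`. -/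
def IsSaturated {e k : ℕ} (M : Matrix (Fin e) (Fin k) ℤ) : Prop :=
  ∀ v : Fin e → ℤ, v ∈ semigroupN M ↔
    ((∃ c : Fin k → ℤ, v = ∑ j, c j • matCol M j) ∧ (fun i => (v i : ℝ)) ∈ coneR M)

/-- if `A ∈ ℤ^{(d+1)×(n+1)}` is the homogenization of `B ∈ ℤ^{d×n}`
(columns `a₀ = (1,0,…,0)` and `a_j = (1,b_j)`), then saturation of `ℕA` implies
saturation of `ℕB`. -/
theorem saturated_of_homogenization_saturated
    {d n : ℕ} (B : Matrix (Fin d) (Fin n) ℤ) (A : Matrix (Fin (d + 1)) (Fin (n + 1)) ℤ)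
    (hA0 : ∀ j : Fin (n + 1), A 0 j = 1)
    (hAi0 : ∀ i : Fin d, A i.succ 0 = 0)
    (hAB : ∀ (i : Fin d) (j : Fin n), A i.succ j.succ = B i j)
    (hsat : IsSaturated A) :
    IsSaturated B := by
  intro v
  constructor
  · rintro ⟨c, rfl⟩
    constructor
    · exact ⟨fun j => (c j : ℤ), by
        funext i
        simp [Finset.sum_apply, matCol]⟩
    · refine ⟨fun j => (c j : ℝ), fun j => by positivity, ?_⟩
      funext i
      simp [Finset.sum_apply, matCol]
  · rintro ⟨⟨c, hc⟩, lam, hlam, hcone⟩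
    -- lift v to w = (⌈∑ lam⌉, v)
    set S : ℝ := ∑ j, lam j with hS
    set t : ℤ := ⌈S⌉ with ht
    set w : Fin (d + 1) → ℤ := Fin.cons t v with hw
    have hv : ∀ i : Fin d, v i = ∑ j, c j * B i j := by
      intro i
      have := congrFun hc i
      simpa [Finset.sum_apply, matCol] using this
    have hvr : ∀ i : Fin d, (v i : ℝ) = ∑ j, lam j * (B i j : ℝ) := by
      intro i
      have := congrFun hcone i
      simpa [Finset.sum_apply] using this
    have hwA : w ∈ semigroupN A := by
      rw [hsat w]
      constructor
      · refine ⟨Fin.cons (t - ∑ j, c j) c, ?_⟩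
        funext i
        induction i using Fin.cases with
        | zero =>
          simp [hw, Finset.sum_apply, matCol, Fin.sum_univ_succ, hA0]
        | succ i =>
          simp [hw, Finset.sum_apply, matCol, Fin.sum_univ_succ, hAi0, hAB, hv i]
      · refine ⟨Fin.cons ((t : ℝ) - S) lam, ?_, ?_⟩
        · intro j
          induction j using Fin.cases with
          | zero => simpa using sub_nonneg.mpr (Int.le_ceil S)
          | succ j => simpa using hlam j
        · funext i
          induction i using Fin.cases with
          | zero =>
            simp [hw, Finset.sum_apply, Fin.sum_univ_succ, hA0, hS]
          | succ i =>
            simp [hw, Finset.sum_apply, Fin.sum_univ_succ, hAi0, hAB, hvr i]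
    obtain ⟨e, he⟩ := hwA
    refine ⟨fun j => e j.succ, ?_⟩
    funext i
    have := congrFun he i.succ
    simp only [hw, Fin.cons_succ] at this
    rw [this]
    simp [Finset.sum_apply, matCol, Fin.sum_univ_succ, hAi0, hAB]
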